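/- Let g ∈ GL₄(ℂ) satisfy g*Jg = λ·J for some λ ∈ ℝ_{>0}, and write g in 2×2 blocks as g = [[A, B],[C, E]]. Let Z ∈ M₂(ℂ) be such that (1/(2i))(Z − Z*) is positive definite. Then C·Z + E is invertible, and the matrix W = (A·Z + B)·(C·Z + E)⁻¹ again satisfies that (1/(2i))(W − W*) is positive definite; that is, g⟨Z⟩ := (AZ + B)(CZ + E)⁻¹ maps the hermitian upper half-space ℋ₂ into itself. -/

import Mathlib

/-!
With `M = A Z + B` and `N = C Z + E`, the relation `gᴴ J g = λ J` gives
`Nᴴ M - Mᴴ N = λ (Z - Zᴴ)`. A vector in the kernel of `N` makes the quadratic form of the left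
side vanish, so positivity of `Im Z` forces `N` to be invertible. Then
`W - Wᴴ = (N⁻¹)ᴴ (Nᴴ M - Mᴴ N) N⁻¹ = λ (N⁻¹)ᴴ (Z - Zᴴ) N⁻¹` is congruent to a positive multiple
of `Z - Zᴴ`, and congruence by an invertible matrix preserves positive definiteness.
-/

open scoped ComplexOrder
open Matrix

noncomputable section

/-- The matrix `J = [[0, −1₂], [1₂, 0]]` in 2×2 block form. -/
def J4 : Matrix (Fin 2 ⊕ Fin 2) (Fin 2 ⊕ Fin 2) ℂ :=
  Matrix.fromBlocks 0 (-1) 1 0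

namespace Matrix

variable {m R : Type*} [Fintype m]

section CommRing

variable [DecidableEq m] [CommRing R] [StarRing R]

theorem fromBlocks_conjTranspose_mul_J_mul (A B C E : Matrix m m R) :
    (fromBlocks A B C E)ᴴ * J m R * fromBlocks A B C E =
      fromBlocks (Cᴴ * A - Aᴴ * C) (Cᴴ * B - Aᴴ * E) (Eᴴ * A - Bᴴ * C) (Eᴴ * B - Bᴴ * E) := by
  simp [J, fromBlocks_conjTranspose, fromBlocks_multiply, sub_eq_add_neg]

theorem conjTranspose_mul_sub_conjTranspose_mul_eq_smul {A B C E : Matrix m m R} {μ : R}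
    (hg : (fromBlocks A B C E)ᴴ * J m R * fromBlocks A B C E = μ • J m R) (Z : Matrix m m R) :
    (C * Z + E)ᴴ * (A * Z + B) - (A * Z + B)ᴴ * (C * Z + E) = μ • (Z - Zᴴ) := by
  rw [fromBlocks_conjTranspose_mul_J_mul, J, fromBlocks_smul] at hg
  obtain ⟨hCA, hCB, hEA, hEB⟩ := fromBlocks_inj.mp hg
  calc (C * Z + E)ᴴ * (A * Z + B) - (A * Z + B)ᴴ * (C * Z + E)
      = Zᴴ * (Cᴴ * A - Aᴴ * C) * Z + (Eᴴ * A - Bᴴ * C) * Z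
          + Zᴴ * (Cᴴ * B - Aᴴ * E) + (Eᴴ * B - Bᴴ * E) := by
        simp only [conjTranspose_add, conjTranspose_mul]
        noncomm_ring
    _ = μ • (Z - Zᴴ) := by
        rw [hCA, hCB, hEA, hEB]
        simp [sub_eq_add_neg, add_comm]

theorem mul_inv_sub_conjTranspose_mul_inv (M : Matrix m m R) {N : Matrix m m R} (hN : IsUnit N) :
    M * N⁻¹ - (M * N⁻¹)ᴴ = (N⁻¹)ᴴ * (Nᴴ * M - Mᴴ * N) * N⁻¹ := by
  have hNN : N * N⁻¹ = 1 := mul_nonsing_inv N ((isUnit_iff_isUnit_det N).mp hN)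
  calc M * N⁻¹ - (M * N⁻¹)ᴴ = (N * N⁻¹)ᴴ * (M * N⁻¹) - (M * N⁻¹)ᴴ * (N * N⁻¹) := by
        simp [hNN]
    _ = (N⁻¹)ᴴ * (Nᴴ * M - Mᴴ * N) * N⁻¹ := by
        simp only [conjTranspose_mul, Matrix.sub_mul, Matrix.mul_sub, Matrix.mul_assoc]

end CommRing

theorem mulVec_injective_of_posDef_smul_sub [CommRing R] [PartialOrder R] [StarRing R]
    {c : R} {M N : Matrix m m R} (h : (c • (Nᴴ * M - Mᴴ * N)).PosDef) :
    Function.Injective N.mulVec := by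
  refine (injective_iff_map_eq_zero N.mulVecLin).mpr fun v hv => ?_
  by_contra hv0
  have hpos := h.dotProduct_mulVec_pos hv0
  have hNv : N *ᵥ v = 0 := hv
  simp [smul_mulVec, sub_mulVec, ← mulVec_mulVec, dotProduct_mulVec, ← star_mulVec, hNv]
    at hpos

end Matrix

/-- If `g = [[A, B], [C, E]] ∈ GL₄(ℂ)` satisfies `g* J g = λ·J`
with `λ ∈ ℝ_{>0}`, and `Z ∈ ℋ₂` (i.e. `(1/(2i))(Z − Z*)` is positive definite), then
`C·Z + E` is invertible and `W = (A·Z + B)(C·Z + E)⁻¹` again lies in `ℋ₂`. -/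
theorem stmt12 (g : Matrix (Fin 2 ⊕ Fin 2) (Fin 2 ⊕ Fin 2) ℂ)
    (A B C E : Matrix (Fin 2) (Fin 2) ℂ)
    (hblk : g = Matrix.fromBlocks A B C E)
    (l : ℝ) (hl : 0 < l)
    (hg : gᴴ * J4 * g = (l : ℂ) • J4)
    (Z : Matrix (Fin 2) (Fin 2) ℂ)
    (hZ : ((((2 : ℂ) * Complex.I)⁻¹) • (Z - Zᴴ)).PosDef) :
    IsUnit (C * Z + E) ∧
      ((((2 : ℂ) * Complex.I)⁻¹) •
        ((A * Z + B) * (C * Z + E)⁻¹ - ((A * Z + B) * (C * Z + E)⁻¹)ᴴ)).PosDef := by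
  subst hblk
  have hNM := conjTranspose_mul_sub_conjTranspose_mul_eq_smul hg Z
  have hIm : (((2 : ℂ) * Complex.I)⁻¹ •
      ((C * Z + E)ᴴ * (A * Z + B) - (A * Z + B)ᴴ * (C * Z + E))).PosDef := by
    rw [hNM, smul_comm]
    exact hZ.smul (Complex.zero_lt_real.mpr hl)
  have hN : IsUnit (C * Z + E) :=
    mulVec_injective_iff_isUnit.mp (mulVec_injective_of_posDef_smul_sub hIm)
  refine ⟨hN, ?_⟩
  rw [mul_inv_sub_conjTranspose_mul_inv _ hN, ← Matrix.smul_mul, ← Matrix.mul_smul]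
  exact hIm.conjTranspose_mul_mul_same
    (mulVec_injective_of_isUnit (isUnit_nonsing_inv_iff.mpr hN))

end
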